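/- Let (X,ρ,μ) be a space of homogeneous type, let q ∈ (0,∞), and let N be a ball quasi-Banach function quasi-norm on (X,μ). If f is a measurable function on X for which there exists s₀ ∈ (0,1) with N((∫_X |f(·)−f(y)|^q/(U(·,y)·ρ(·,y)^{s₀q}) dμ(y))^{1/q}) < ∞, then for every R ∈ (0,∞), lim_{s→0⁺} s^{1/q}·N((∫_{B(·,R)} |f(·)−f(y)|^q/(U(·,y)·ρ(·,y)^{sq}) dμ(y))^{1/q}) = 0. -/

import Mathlib

noncomputable section

open MeasureTheory Filter Set
open scoped ENNReal NNReal Topology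

namespace Paper

variable {X : Type*} [MeasurableSpace X]

/-- The ball with center `x` and radius `r` for the quasi-metric `ρ`. -/
def ball (ρ : X → X → ℝ) (x : X) (r : ℝ) : Set X := {y | ρ x y < r}

/-- `(X, ρ, μ)` is a quasi-metric measure space with quasi-triangle constant `K₀`:
`ρ` is a quasi-metric with constant `K₀` and all `ρ`-balls are `μ`-measurable. -/
structure IsQuasiMetricMeasure (ρ : X → X → ℝ) (μ : Measure X) (K₀ : ℝ) : Prop where
  nonneg : ∀ x y, 0 ≤ ρ x y
  eq_zero_iff : ∀ x y, ρ x y = 0 ↔ x = y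
  symm : ∀ x y, ρ x y = ρ y x
  one_le : 1 ≤ K₀
  triangle : ∀ x y z, ρ x z ≤ K₀ * (ρ x y + ρ y z)
  measurableSet_ball : ∀ x r, MeasurableSet (ball ρ x r)

/-- The doubling condition for `μ` with doubling constant `L ∈ [1, ∞)`:
`0 < μ(B(x,2r)) ≤ L · μ(B(x,r)) < ∞` for all `x` and `r > 0`. -/
def IsDoubling (ρ : X → X → ℝ) (μ : Measure X) (L : ℝ≥0∞) : Prop :=
  1 ≤ L ∧ L < ∞ ∧ ∀ (x : X) (r : ℝ), 0 < r →
    0 < μ (ball ρ x r) ∧ μ (ball ρ x (2 * r)) ≤ L * μ (ball ρ x r) ∧ μ (ball ρ x r) < ∞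

/-- `U(x,y) := min{μ(B(x,ρ(x,y))), μ(B(y,ρ(x,y)))}`. -/
def U (ρ : X → X → ℝ) (μ : Measure X) (x y : X) : ℝ≥0∞ :=
  min (μ (ball ρ x (ρ x y))) (μ (ball ρ y (ρ x y)))

/-- `N` is a ball quasi-Banach function quasi-norm on `(X, μ)` (balls taken with
respect to `ρ`), with quasi-triangle constant `κ ∈ [1,∞)`. -/
structure IsBallQBFNorm (ρ : X → X → ℝ) (μ : Measure X)
    (N : (X → ℝ≥0∞) → ℝ≥0∞) (κ : ℝ≥0∞) : Prop where
  one_le_kappa : 1 ≤ κ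
  kappa_lt_top : κ < ∞
  eq_zero_iff : ∀ f : X → ℝ≥0∞, N f = 0 ↔ f =ᵐ[μ] 0
  mono : ∀ f g : X → ℝ≥0∞, (∀ᵐ x ∂μ, g x ≤ f x) → N g ≤ N f
  iSup_seq : ∀ F : ℕ → X → ℝ≥0∞, (∀ᵐ x ∂μ, Monotone fun m => F m x) →
    N (fun x => ⨆ m, F m x) = ⨆ m, N (F m)
  indicator_ball_lt_top : ∀ (x : X) (r : ℝ), 0 < r →
    N ((ball ρ x r).indicator fun _ => 1) < ∞
  smul : ∀ (c : ℝ≥0) (f : X → ℝ≥0∞), N (fun x => c * f x) = c * N f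
  add_le : ∀ f g : X → ℝ≥0∞, N (fun x => f x + g x) ≤ κ * (N f + N g)

/-- The Maz'ya–Shaposhnikova integrand on a set `E`:
`x ↦ (∫_E |f(x) − f(y)|^q / (U(x,y) ρ(x,y)^{sq}) dμ(y))^{1/q}`. -/
def sob (ρ : X → X → ℝ) (μ : Measure X) (E : Set X) (f : X → ℝ) (q s : ℝ) (x : X) :
    ℝ≥0∞ :=
  (∫⁻ y in E, ENNReal.ofReal |f x - f y| ^ q /
      (U ρ μ x y * ENNReal.ofReal (ρ x y) ^ (s * q)) ∂μ) ^ (1 / q)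

/-!
On `B(x,R)` one has `ρ(x,y)^{s₀q} ≤ max(1,R)^{s₀q} ρ(x,y)^{sq}` for `0 ≤ s ≤ s₀`, so the
truncated integrand at `s` is dominated by a fixed multiple of the global integrand at `s₀`.
Hence the `N`-quasi-norms stay bounded as `s → 0⁺`, and the factor `s^{1/q}` sends the
product to `0`.
-/

theorem rpow_le_rpow_mul_rpow_of_le {t M : ℝ≥0∞} {α β : ℝ} (htM : t ≤ M) (hM : 1 ≤ M)
    (hα : 0 ≤ α) (hαβ : α ≤ β) : t ^ β ≤ M ^ β * t ^ α := by
  rcases le_total t 1 with ht | ht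
  · calc t ^ β ≤ t ^ α := ENNReal.rpow_le_rpow_of_exponent_ge ht hαβ
      _ ≤ M ^ β * t ^ α :=
        le_mul_of_one_le_left' (by simpa using ENNReal.rpow_le_rpow hM (hα.trans hαβ))
  · calc t ^ β ≤ M ^ β := ENNReal.rpow_le_rpow htM (hα.trans hαβ)
      _ ≤ M ^ β * t ^ α := le_mul_of_one_le_right' (by simpa using ENNReal.rpow_le_rpow ht hα)

theorem div_le_mul_div_of_le_mul {a b b' c : ℝ≥0∞} (hc₀ : c ≠ 0) (hc : c ≠ ∞)
    (h : b' ≤ c * b) : a / b ≤ c * (a / b') :=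
  calc a / b = c * a / (c * b) := (ENNReal.mul_div_mul_left _ _ hc₀ hc).symm
    _ ≤ c * a / b' := ENNReal.div_le_div_left h _
    _ = c * (a / b') := mul_div_assoc _ _ _

theorem sob_integrand_le_of_lt {ρ : X → X → ℝ} {μ : Measure X} {f : X → ℝ} {q s s₀ R : ℝ}
    {x y : X} (hy : ρ x y < R) (hq : 0 ≤ q) (hs : 0 ≤ s) (hss₀ : s ≤ s₀) :
    ENNReal.ofReal |f x - f y| ^ q / (U ρ μ x y * ENNReal.ofReal (ρ x y) ^ (s * q)) ≤
      max 1 (ENNReal.ofReal R) ^ (s₀ * q) *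
        (ENNReal.ofReal |f x - f y| ^ q / (U ρ μ x y * ENNReal.ofReal (ρ x y) ^ (s₀ * q))) := by
  have hC : 1 ≤ max 1 (ENNReal.ofReal R) ^ (s₀ * q) := by
    simpa using ENNReal.rpow_le_rpow (le_max_left 1 (ENNReal.ofReal R))
      (mul_nonneg (hs.trans hss₀) hq)
  refine div_le_mul_div_of_le_mul (one_pos.trans_le hC).ne'
    (ENNReal.rpow_ne_top_of_nonneg (mul_nonneg (hs.trans hss₀) hq) (by simp)) ?_
  rw [mul_left_comm]
  gcongr
  exact rpow_le_rpow_mul_rpow_of_le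
    ((ENNReal.ofReal_le_ofReal hy.le).trans (le_max_right _ _)) (le_max_left _ _)
    (mul_nonneg hs hq) (mul_le_mul_of_nonneg_right hss₀ hq)

theorem sob_ball_le {ρ : X → X → ℝ} {μ : Measure X} {f : X → ℝ} {q s s₀ R : ℝ} {x : X}
    (hB : MeasurableSet (ball ρ x R)) (hq : 0 < q) (hs : 0 ≤ s) (hss₀ : s ≤ s₀) :
    sob ρ μ (ball ρ x R) f q s x ≤
      max 1 (ENNReal.ofReal R) ^ s₀ * sob ρ μ univ f q s₀ x := by
  set C := max 1 (ENNReal.ofReal R)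
  have hCq : C ^ (s₀ * q) ≠ ∞ :=
    ENNReal.rpow_ne_top_of_nonneg (mul_nonneg (hs.trans hss₀) hq.le) (by simp [C])
  have hint : ∫⁻ y in ball ρ x R, ENNReal.ofReal |f x - f y| ^ q /
        (U ρ μ x y * ENNReal.ofReal (ρ x y) ^ (s * q)) ∂μ ≤
      C ^ (s₀ * q) * ∫⁻ y in univ, ENNReal.ofReal |f x - f y| ^ q /
        (U ρ μ x y * ENNReal.ofReal (ρ x y) ^ (s₀ * q)) ∂μ :=
    calc _ ≤ ∫⁻ y in ball ρ x R, C ^ (s₀ * q) * (ENNReal.ofReal |f x - f y| ^ q /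
            (U ρ μ x y * ENNReal.ofReal (ρ x y) ^ (s₀ * q))) ∂μ :=
          setLIntegral_mono' hB fun y hy => sob_integrand_le_of_lt hy hq.le hs hss₀
      _ = C ^ (s₀ * q) * ∫⁻ y in ball ρ x R, ENNReal.ofReal |f x - f y| ^ q /
            (U ρ μ x y * ENNReal.ofReal (ρ x y) ^ (s₀ * q)) ∂μ :=
          lintegral_const_mul' _ _ hCq
      _ ≤ _ := mul_le_mul_right (lintegral_mono_set (subset_univ _)) _
  calc sob ρ μ (ball ρ x R) f q s x
      ≤ (C ^ (s₀ * q) * ∫⁻ y in univ, ENNReal.ofReal |f x - f y| ^ q /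
          (U ρ μ x y * ENNReal.ofReal (ρ x y) ^ (s₀ * q)) ∂μ) ^ (1 / q) :=
        ENNReal.rpow_le_rpow hint (by positivity)
    _ = C ^ s₀ * sob ρ μ univ f q s₀ x := by
        rw [sob, ENNReal.mul_rpow_of_nonneg _ _ (by positivity), ← ENNReal.rpow_mul, mul_assoc,
          mul_one_div_cancel hq.ne', mul_one]

theorem IsBallQBFNorm.le_const_mul {ρ : X → X → ℝ} {μ : Measure X}
    {N : (X → ℝ≥0∞) → ℝ≥0∞} {κ : ℝ≥0∞} (hN : IsBallQBFNorm ρ μ N κ) {f g : X → ℝ≥0∞}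
    {c : ℝ≥0∞} (hc : c ≠ ∞) (h : ∀ x, g x ≤ c * f x) : N g ≤ c * N f :=
  calc N g ≤ N (fun x => (c.toNNReal : ℝ≥0∞) * f x) :=
        hN.mono _ _ (Eventually.of_forall fun x => by rw [ENNReal.coe_toNNReal hc]; exact h x)
    _ = c * N f := by rw [hN.smul, ENNReal.coe_toNNReal hc]

theorem tendsto_ofReal_rpow_mul_nhdsGT_zero {q : ℝ} (hq : 0 < q) {K : ℝ≥0∞} (hK : K ≠ ∞) :
    Tendsto (fun s : ℝ => ENNReal.ofReal s ^ (1 / q) * K) (𝓝[>] 0) (𝓝 0) := by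
  have hcont : Continuous fun s : ℝ => ENNReal.ofReal s ^ (1 / q) :=
    ENNReal.continuous_rpow_const.comp ENNReal.continuous_ofReal
  have h := ENNReal.Tendsto.mul_const (hcont.tendsto 0) (Or.inr hK)
  rw [ENNReal.ofReal_zero, ENNReal.zero_rpow_of_pos (one_div_pos.2 hq), zero_mul] at h
  exact h.mono_left nhdsWithin_le_nhds

theorem statement1 (ρ : X → X → ℝ) (μ : Measure X) (K₀ : ℝ)
    (hX : IsQuasiMetricMeasure ρ μ K₀)
    (q : ℝ) (hq : 0 < q)
    (N : (X → ℝ≥0∞) → ℝ≥0∞) (κ : ℝ≥0∞) (hN : IsBallQBFNorm ρ μ N κ)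
    (f : X → ℝ)
    (hfin : ∃ s₀ ∈ Set.Ioo (0:ℝ) 1, N (sob ρ μ Set.univ f q s₀) < ∞) :
    ∀ R : ℝ, 0 < R →
      Tendsto (fun s : ℝ => ENNReal.ofReal s ^ (1 / q) *
          N (fun x => (∫⁻ y in ball ρ x R, ENNReal.ofReal |f x - f y| ^ q /
              (U ρ μ x y * ENNReal.ofReal (ρ x y) ^ (s * q)) ∂μ) ^ (1 / q)))
        (𝓝[>] (0:ℝ)) (𝓝 0) := by
  obtain ⟨s₀, ⟨hs₀, -⟩, hfin⟩ := hfin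
  intro R _
  have hc : max 1 (ENNReal.ofReal R) ^ s₀ ≠ ∞ :=
    ENNReal.rpow_ne_top_of_nonneg hs₀.le (by simp)
  have hbound : ∀ s ∈ Ioo 0 s₀, N (fun x => sob ρ μ (ball ρ x R) f q s x) ≤
      max 1 (ENNReal.ofReal R) ^ s₀ * N (sob ρ μ univ f q s₀) := fun s hs =>
    hN.le_const_mul hc fun x => sob_ball_le (hX.measurableSet_ball x R) hq hs.1.le hs.2.le
  refine tendsto_of_tendsto_of_tendsto_of_le_of_le' tendsto_const_nhds
    (tendsto_ofReal_rpow_mul_nhdsGT_zero hq (ENNReal.mul_ne_top hc hfin.ne))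
    (Eventually.of_forall fun _ => zero_le) ?_
  filter_upwards [Ioo_mem_nhdsGT hs₀] with s hs
  exact mul_le_mul_right (hbound s hs) _
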